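/- arXiv:1805.08114 — 3 statements merged into one kernel-verified Lean document; each statement's English description precedes it below -/
import Mathlib

section
/- Let f : ℝ^d → ℝ be M-smooth, L-Lipschitz, and bounded from below. Consider SGD iterates x_{t+1} = x_t − η_t g_t, where g_t = g(x_t, ξ_t) are stochastic gradients satisfying E_t[g_t] = ∇f(x_t) and bounded noise ‖g_t − ∇f(x_t)‖ ≤ S almost surely, with the global generalized AdaGrad stepsizes η_t = α / (β + Σ_{i=1}^{t−1} ‖g_i‖²)^{1/2+ε}, α, β > 0 and ε ∈ (0, 1/2]. Then liminf_{t→∞} ‖∇f(x_t)‖² · t^{1/2−ε} = 0 almost surely. -/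
/-!
Along any trajectory, the descent lemma for the `M`-smooth `f`, telescoped, bounds
`∑ η_t ⟪∇f(x_t), g_t⟫` by `f(x_1) - inf f + M ∑ η_t² ‖g_t‖²`. The gradients are bounded by `L`,
hence `‖g_t‖ ≤ L + S`, and `∑ η_t² ‖g_t‖² = α² ∑ ‖g_t‖² / (β + ∑_{i<t} ‖g_i‖²)^{1+2ε}` is bounded
by comparison with `∫ s^{-(1+2ε)} ds`. Since `η_t` and `x_t` are known at time `t`, taking
expectations replaces `g_t` by `∇f(x_t)`: the series `∑ η_t ‖∇f(x_t)‖²` has bounded expectation,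
so it converges almost surely. Finally `η_t ≥ c t^{-(1/2+ε)}`, so `‖∇f(x_t)‖² t^{1/2-ε} ≥ δ` for
all large `t` would force `η_t ‖∇f(x_t)‖² ≥ cδ/t`, contradicting convergence.
-/

open MeasureTheory Filter Real Finset
open scoped NNReal InnerProductSpace

section Gradient

variable {E : Type*} [NormedAddCommGroup E] [InnerProductSpace ℝ E] [CompleteSpace E]
  {f : E → ℝ} {K : ℝ≥0}

lemma LipschitzWith.norm_gradient_le (hf : LipschitzWith K f) (y : E) : ‖gradient f y‖ ≤ K := by
  rw [gradient, LinearIsometryEquiv.norm_map]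
  exact norm_fderiv_le_of_lipschitz ℝ hf

lemma le_add_inner_gradient_add_mul_norm_sq (hf : Differentiable ℝ f)
    (hgrad : LipschitzWith K (gradient f)) (p v : E) :
    f (p + v) ≤ f p + ⟪gradient f p, v⟫_ℝ + K * ‖v‖ ^ 2 := by
  have hbound : ∀ z ∈ Metric.closedBall p ‖v‖,
      ‖fderiv ℝ f z - fderiv ℝ f p‖ ≤ K * ‖v‖ := fun z hz => by
    rw [← toDual_gradient, ← toDual_gradient, ← map_sub, LinearIsometryEquiv.norm_map]
    calc ‖gradient f z - gradient f p‖ ≤ K * ‖z - p‖ := hgrad.norm_sub_le z p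
      _ ≤ K * ‖v‖ := by gcongr; exact mem_closedBall_iff_norm.mp hz
  have hmvt := (convex_closedBall p ‖v‖).norm_image_sub_le_of_norm_fderiv_le' (fun z _ => hf z)
    hbound (Metric.mem_closedBall_self (norm_nonneg v)) (y := p + v) (by simp)
  rw [add_sub_cancel_left, ← inner_gradient_left, Real.norm_eq_abs] at hmvt
  linarith [le_abs_self (f (p + v) - f p - ⟪gradient f p, v⟫_ℝ)]

lemma sum_mul_inner_gradient_le_of_update (hf : Differentiable ℝ f)
    (hgrad : LipschitzWith K (gradient f)) {B : ℝ} (hB : ∀ y, B ≤ f y)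
    {x g : ℕ → E} {η : ℕ → ℝ} (hupd : ∀ t, x (t + 1) = x t - η t • g t) (T : ℕ) :
    ∑ t ∈ range T, η t * ⟪gradient f (x t), g t⟫_ℝ
      ≤ f (x 0) - B + K * ∑ t ∈ range T, η t ^ 2 * ‖g t‖ ^ 2 := by
  have hstep : ∀ t, η t * ⟪gradient f (x t), g t⟫_ℝ
      ≤ f (x t) - f (x (t + 1)) + K * (η t ^ 2 * ‖g t‖ ^ 2) := fun t => by
    have h := le_add_inner_gradient_add_mul_norm_sq hf hgrad (x t) (-(η t • g t))
    rw [← sub_eq_add_neg, ← hupd, inner_neg_right, real_inner_smul_right, norm_neg, norm_smul,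
      Real.norm_eq_abs, mul_pow, sq_abs] at h
    linarith
  calc ∑ t ∈ range T, η t * ⟪gradient f (x t), g t⟫_ℝ
      ≤ ∑ t ∈ range T, (f (x t) - f (x (t + 1)) + K * (η t ^ 2 * ‖g t‖ ^ 2)) :=
        sum_le_sum fun t _ => hstep t
    _ = f (x 0) - f (x T) + K * ∑ t ∈ range T, η t ^ 2 * ‖g t‖ ^ 2 := by
        rw [sum_add_distrib, sum_range_sub' (fun t => f (x t)), mul_sum]
    _ ≤ f (x 0) - B + K * ∑ t ∈ range T, η t ^ 2 * ‖g t‖ ^ 2 := by linarith [hB (x T)]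

end Gradient

lemma sub_div_rpow_le {u v p : ℝ} (hp : 1 < p) (hu : 0 < u) (huv : u ≤ v) :
    (v - u) / v ^ p ≤ (u ^ (1 - p) - v ^ (1 - p)) / (p - 1) := by
  have hv : 0 < v := hu.trans_le huv
  set r := u / v with hr
  have hr0 : 0 < r := div_pos hu hv
  -- Tangent line of `s ↦ s ^ (1 - p)` at `1`, from `exp x ≥ 1 + x` and `log r ≤ r - 1`.
  have htangent : 1 - r ≤ (r ^ (1 - p) - 1) / (p - 1) := by
    rw [le_div_iff₀ (by linarith)]
    have hlog : 1 - r ≤ -log r := by linarith [log_le_sub_one_of_pos hr0]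
    have hexp : 1 + (1 - p) * log r ≤ r ^ (1 - p) := by
      rw [rpow_def_of_pos hr0, mul_comm]
      linarith [add_one_le_exp (log r * (1 - p))]
    nlinarith
  have hlhs : (v - u) / v ^ p = (1 - r) * v ^ (1 - p) := by
    rw [rpow_sub hv, rpow_one, hr]
    field_simp
  have hrhs : (u ^ (1 - p) - v ^ (1 - p)) / (p - 1)
      = (r ^ (1 - p) - 1) / (p - 1) * v ^ (1 - p) := by
    rw [hr, div_rpow hu.le hv.le]
    field_simp
  rw [hlhs, hrhs]
  exact mul_le_mul_of_nonneg_right htangent (rpow_nonneg hv.le _)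

lemma le_add_sum_range_of_nonneg {β : ℝ} {a : ℕ → ℝ} (ha : ∀ i, 0 ≤ a i) (t : ℕ) :
    β ≤ β + ∑ i ∈ range t, a i :=
  le_add_of_nonneg_right (sum_nonneg fun i _ => ha i)

lemma sum_div_rpow_partialSum_le {β K p : ℝ} (hβ : 0 < β) (hp : 1 < p)
    {a : ℕ → ℝ} (ha : ∀ t, 0 ≤ a t) (haK : ∀ t, a t ≤ K) (T : ℕ) :
    ∑ t ∈ range T, a t / (β + ∑ i ∈ range t, a i) ^ p
      ≤ ((β + K) / β) ^ p * β ^ (1 - p) / (p - 1) := by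
  set A : ℕ → ℝ := fun t => β + ∑ i ∈ range t, a i with hA
  have hK : 0 ≤ K := (ha 0).trans (haK 0)
  have hβA : ∀ t, β ≤ A t := le_add_sum_range_of_nonneg ha
  have hA_pos : ∀ t, 0 < A t := fun t => hβ.trans_le (hβA t)
  have hA_succ : ∀ t, A (t + 1) = A t + a t := fun t => by simp only [hA, sum_range_succ]; ring
  set c := ((β + K) / β) ^ p
  -- Compare the `t`-th term with `∫_{A t}^{A (t+1)} s ^ (-p) ds`; replacing `A t` by `A (t + 1)`
  -- costs at most the factor `c`, as the increments are at most `K ≤ (K / β) * A t`.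
  have hstep : ∀ t, a t / A t ^ p ≤ c * ((A t ^ (1 - p) - A (t + 1) ^ (1 - p)) / (p - 1)) := by
    intro t
    have hratio : A (t + 1) ≤ (β + K) / β * A t := by
      rw [hA_succ, div_mul_eq_mul_div, le_div_iff₀ hβ]
      nlinarith [hβA t, haK t]
    have hpow : A (t + 1) ^ p ≤ c * A t ^ p := by
      rw [← mul_rpow (by positivity) (hA_pos t).le]
      exact rpow_le_rpow (hA_pos _).le hratio (by linarith)
    calc a t / A t ^ p ≤ c * (a t / A (t + 1) ^ p) := by
          rw [mul_div_assoc', div_le_div_iff₀ (rpow_pos_of_pos (hA_pos t) p)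
            (rpow_pos_of_pos (hA_pos (t + 1)) p)]
          nlinarith [ha t]
      _ ≤ c * ((A t ^ (1 - p) - A (t + 1) ^ (1 - p)) / (p - 1)) := by
          refine mul_le_mul_of_nonneg_left ?_ (by positivity)
          have hle : A t ≤ A (t + 1) := by rw [hA_succ]; linarith [ha t]
          have hgap := sub_div_rpow_le hp (hA_pos t) hle
          rwa [hA_succ, add_sub_cancel_left, ← hA_succ] at hgap
  calc ∑ t ∈ range T, a t / A t ^ p
      ≤ ∑ t ∈ range T, c * ((A t ^ (1 - p) - A (t + 1) ^ (1 - p)) / (p - 1)) :=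
        sum_le_sum fun t _ => hstep t
    _ = c * ((A 0 ^ (1 - p) - A T ^ (1 - p)) / (p - 1)) := by
        rw [← mul_sum, ← sum_div, sum_range_sub' (fun t => A t ^ (1 - p))]
    _ ≤ c * β ^ (1 - p) / (p - 1) := by
        have : 0 ≤ A T ^ (1 - p) := rpow_nonneg (hA_pos T).le _
        have hA0 : A 0 = β := by simp [hA]
        rw [mul_div_assoc, hA0]
        gcongr
        linarith

-- With `a i = ‖g i‖²` and iterates indexed from `0`, this is the paper's
-- `η_t = α / (β + Σ_{i=1}^{t-1} ‖g_i‖²)^e`: the sum covers the gradients seen before step `t`.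
noncomputable def adagradStepsize (α β e : ℝ) (a : ℕ → ℝ) (t : ℕ) : ℝ :=
  α / (β + ∑ i ∈ range t, a i) ^ e

section AdagradStepsize

variable {α β e K : ℝ} {a : ℕ → ℝ}

lemma adagradStepsize_pos (hα : 0 < α) (hβ : 0 < β) (ha : ∀ i, 0 ≤ a i) (t : ℕ) :
    0 < adagradStepsize α β e a t :=
  div_pos hα (rpow_pos_of_pos (hβ.trans_le (le_add_sum_range_of_nonneg ha t)) e)

lemma adagradStepsize_le (hα : 0 ≤ α) (hβ : 0 < β) (he : 0 ≤ e) (ha : ∀ i, 0 ≤ a i) (t : ℕ) :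
    adagradStepsize α β e a t ≤ α / β ^ e :=
  div_le_div_of_nonneg_left hα (rpow_pos_of_pos hβ e)
    (rpow_le_rpow hβ.le (le_add_sum_range_of_nonneg ha t) he)

lemma div_rpow_le_adagradStepsize (hα : 0 ≤ α) (hβ : 0 < β) (he : 0 ≤ e) (ha : ∀ i, 0 ≤ a i)
    (haK : ∀ i, a i ≤ K) {t : ℕ} (ht : 1 ≤ t) :
    α / (β + K) ^ e / (t : ℝ) ^ e ≤ adagradStepsize α β e a t := by
  have hK : 0 ≤ K := (ha 0).trans (haK 0)
  have ht' : (1 : ℝ) ≤ t := by exact_mod_cast ht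
  have hβA := le_add_sum_range_of_nonneg (β := β) ha t
  have hsum : β + ∑ i ∈ range t, a i ≤ (β + K) * t := by
    have : ∑ i ∈ range t, a i ≤ t * K := by
      simpa using sum_le_sum fun i (_ : i ∈ range t) => haK i
    nlinarith
  rw [div_div, ← mul_rpow (by linarith) (by positivity)]
  exact div_le_div_of_nonneg_left hα (rpow_pos_of_pos (hβ.trans_le hβA) e)
    (rpow_le_rpow (hβ.le.trans hβA) hsum he)

lemma sum_adagradStepsize_sq_mul_le (hβ : 0 < β) (he : 1 < 2 * e)
    (ha : ∀ i, 0 ≤ a i) (haK : ∀ i, a i ≤ K) (T : ℕ) :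
    ∑ t ∈ range T, adagradStepsize α β e a t ^ 2 * a t
      ≤ α ^ 2 * (((β + K) / β) ^ (2 * e) * β ^ (1 - 2 * e) / (2 * e - 1)) := by
  have hsq : ∀ t, adagradStepsize α β e a t ^ 2 * a t
      = α ^ 2 * (a t / (β + ∑ i ∈ range t, a i) ^ (2 * e)) := fun t => by
    have hpow : ((β + ∑ i ∈ range t, a i) ^ e) ^ 2 = (β + ∑ i ∈ range t, a i) ^ (2 * e) := by
      rw [← rpow_natCast, ← rpow_mul (hβ.le.trans (le_add_sum_range_of_nonneg ha t))]
      ring_nf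
    rw [adagradStepsize, div_pow, hpow]
    ring
  simp only [hsq, ← mul_sum]
  exact mul_le_mul_of_nonneg_left (sum_div_rpow_partialSum_le hβ he ha haK T) (sq_nonneg α)

end AdagradStepsize

lemma liminf_eq_zero_of_frequently_lt {u : ℕ → ℝ} (hu : ∀ t, 0 ≤ u t)
    (h : ∀ δ > 0, ∃ᶠ t in atTop, u t < δ) : liminf u atTop = 0 := by
  rw [liminf_eq, ← csSup_Iic (a := (0 : ℝ))]
  congr 1
  ext δ
  refine ⟨fun hδ => Set.mem_Iic.mpr (not_lt.mp fun hpos => ?_),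
    fun hδ => Eventually.of_forall fun t => (Set.mem_Iic.mp hδ).trans (hu t)⟩
  obtain ⟨t, hlt, hle⟩ := ((h δ hpos).and_eventually hδ).exists
  exact (hlt.trans_le hle).false

lemma not_summable_of_eventually_div_natCast_le {w : ℕ → ℝ} {c : ℝ} (hc : 0 < c)
    (hw : ∀ᶠ t : ℕ in atTop, c / t ≤ w t) : ¬ Summable w := fun hsum =>
  Real.not_summable_one_div_natCast <| (hsum.div_const c).of_norm_bounded_eventually_nat <| by
    filter_upwards [hw] with t ht
    rw [norm_of_nonneg (by positivity), le_div_iff₀ hc]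
    linarith [one_div_mul_eq_div (t : ℝ) c]

lemma liminf_mul_rpow_eq_zero_of_summable {a η : ℕ → ℝ} {c p r : ℝ} (hc : 0 < c) (hpr : p + r = 1)
    (ha : ∀ t, 0 ≤ a t) (hη : ∀ᶠ t : ℕ in atTop, c / (t : ℝ) ^ p ≤ η t)
    (hsum : Summable fun t => η t * a t) :
    liminf (fun t : ℕ => a t * (t : ℝ) ^ r) atTop = 0 := by
  refine liminf_eq_zero_of_frequently_lt (fun t => mul_nonneg (ha t) (by positivity)) fun δ hδ => ?_
  by_contra hsmall
  simp only [not_frequently, not_lt] at hsmall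
  refine not_summable_of_eventually_div_natCast_le (mul_pos hc hδ) ?_ hsum
  filter_upwards [hη, hsmall, eventually_ge_atTop 1] with t hηt hat ht
  have ht0 : (0 : ℝ) < t := by exact_mod_cast ht
  have hsplit : (t : ℝ) = t ^ p * t ^ r := by rw [← rpow_add ht0, hpr, rpow_one]
  calc c * δ / t = c / (t : ℝ) ^ p * (δ / (t : ℝ) ^ r) := by
        rw [div_mul_div_comm, ← hsplit]
    _ ≤ η t * a t := by
        gcongr
        · exact (div_pos hc (rpow_pos_of_pos ht0 p)).le.trans hηt
        · rwa [div_le_iff₀ (rpow_pos_of_pos ht0 r)]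

section Probability

variable {Ω E : Type*} [NormedAddCommGroup E] [InnerProductSpace ℝ E] [CompleteSpace E]
  {m m0 : MeasurableSpace Ω} {μ : Measure Ω}

lemma integral_inner_eq_of_condExp_eq (hm : m ≤ m0) [SigmaFinite (μ.trim hm)] {h g φ : Ω → E}
    (hh : StronglyMeasurable[m] h) (hhg : Integrable (fun ω => ⟪h ω, g ω⟫_ℝ) μ)
    (hg : Integrable g μ) (hcond : μ[g|m] =ᵐ[μ] φ) :
    ∫ ω, ⟪h ω, g ω⟫_ℝ ∂μ = ∫ ω, ⟪h ω, φ ω⟫_ℝ ∂μ := by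
  rw [← integral_condExp hm]
  refine integral_congr_ae ?_
  filter_upwards [condExp_bilin_of_stronglyMeasurable_left (innerSL ℝ) hh hhg hg, hcond]
    with ω hpull hω
  rw [hω] at hpull
  exact hpull

lemma ae_summable_of_sum_integral_le {w : ℕ → Ω → ℝ} (hw0 : ∀ t ω, 0 ≤ w t ω)
    (hw : ∀ t, Integrable (w t) μ) {C : ℝ} (hC : ∀ T, ∑ t ∈ range T, ∫ ω, w t ω ∂μ ≤ C) :
    ∀ᵐ ω ∂μ, Summable fun t => w t ω := by
  have hmeas : ∀ t, AEMeasurable (fun ω => ENNReal.ofReal (w t ω)) μ := fun t =>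
    (hw t).aemeasurable.ennreal_ofReal
  have hlint : ∫⁻ ω, ∑' t, ENNReal.ofReal (w t ω) ∂μ ≠ ⊤ := by
    rw [lintegral_tsum hmeas]
    refine ne_top_of_le_ne_top (ENNReal.ofReal_ne_top (r := C))
      (ENNReal.tsum_le_of_sum_range_le fun T => ?_)
    simp_rw [← ofReal_integral_eq_lintegral_ofReal (hw _) (ae_of_all _ (hw0 _))]
    rw [← ENNReal.ofReal_sum_of_nonneg fun t _ => integral_nonneg (hw0 t)]
    exact ENNReal.ofReal_le_ofReal (hC T)
  filter_upwards [ae_lt_top' (AEMeasurable.tsum hmeas) hlint] with ω hω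
  exact (ENNReal.summable_toReal hω.ne).congr fun t => ENNReal.toReal_ofReal (hw0 t ω)

end Probability

section Adapted

variable {Ω E : Type*} [NormedAddCommGroup E] {m0 : MeasurableSpace Ω} {ℱ : Filtration ℕ m0}
  {x g : ℕ → Ω → E} {η : ℕ → Ω → ℝ}

lemma stronglyAdapted_of_update [NormedSpace ℝ E] (hx0 : StronglyMeasurable[ℱ 0] (x 0))
    (hη : StronglyAdapted ℱ η)
    (hg : ∀ t, StronglyMeasurable[ℱ (t + 1)] (g t))
    (hupd : ∀ t ω, x (t + 1) ω = x t ω - η t ω • g t ω) : StronglyAdapted ℱ x := by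
  intro t
  induction t with
  | zero => exact hx0
  | succ t ih =>
    rw [funext (hupd t)]
    exact (ih.mono (ℱ.mono t.le_succ)).sub (((hη t).mono (ℱ.mono t.le_succ)).smul (hg t))

lemma stronglyAdapted_adagradStepsize (α β e : ℝ)
    (hg : ∀ t, StronglyMeasurable[ℱ (t + 1)] (g t)) :
    StronglyAdapted ℱ fun t ω => adagradStepsize α β e (fun i => ‖g i ω‖ ^ 2) t := by
  intro t
  refine Measurable.stronglyMeasurable (measurable_const.div ((measurable_const.add
    (Finset.measurable_sum _ fun i hi => ?_)).pow_const e))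
  exact ((hg i).mono (ℱ.mono (mem_range.mp hi))).norm.measurable.pow_const 2

end Adapted

section SGD

variable {Ω E : Type*} [NormedAddCommGroup E] [InnerProductSpace ℝ E] [CompleteSpace E]
  {m0 : MeasurableSpace Ω} {μ : Measure Ω} {ℱ : Filtration ℕ m0}
  {x g : ℕ → Ω → E} {η : ℕ → Ω → ℝ} [IsProbabilityMeasure μ] {f : E → ℝ} {K : ℝ≥0}
  {L B D ηmax : ℝ}

lemma sum_integral_stepsize_mul_norm_gradient_sq_le (hf : Differentiable ℝ f)
    (hgrad : LipschitzWith K (gradient f)) (hgrad_le : ∀ y, ‖gradient f y‖ ≤ L)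
    (hB : ∀ y, B ≤ f y) {x₁ : E} (hx0 : ∀ ω, x 0 ω = x₁) (hx : StronglyAdapted ℱ x)
    (hη : StronglyAdapted ℱ η)
    (hη_le : ∀ t ω, |η t ω| ≤ ηmax) (hg_int : ∀ t, Integrable (g t) μ)
    (hg_cond : ∀ t, μ[g t | ℱ t] =ᵐ[μ] fun ω => gradient f (x t ω))
    (hupd : ∀ t ω, x (t + 1) ω = x t ω - η t ω • g t ω)
    (hD : ∀ᵐ ω ∂μ, ∀ T, ∑ t ∈ range T, η t ω ^ 2 * ‖g t ω‖ ^ 2 ≤ D) (T : ℕ) :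
    ∑ t ∈ range T, ∫ ω, η t ω * ‖gradient f (x t ω)‖ ^ 2 ∂μ ≤ f x₁ - B + K * D := by
  set h : ℕ → Ω → E := fun t ω => η t ω • gradient f (x t ω)
  have hh : ∀ t, StronglyMeasurable[ℱ t] (h t) := fun t =>
    (hη t).smul (hgrad.continuous.comp_stronglyMeasurable (hx t))
  have hhg : ∀ t, Integrable (fun ω => ⟪h t ω, g t ω⟫_ℝ) μ := fun t => by
    refine ((hg_int t).norm.const_mul (ηmax * L)).mono'
      (((hh t).mono (ℱ.le t)).aestronglyMeasurable.inner (hg_int t).aestronglyMeasurable)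
      (ae_of_all _ fun ω => (norm_inner_le_norm _ _).trans ?_)
    gcongr
    rw [norm_smul, Real.norm_eq_abs]
    exact mul_le_mul (hη_le t ω) (hgrad_le _) (norm_nonneg _) ((abs_nonneg _).trans (hη_le t ω))
  -- The stepsize is `ℱ t`-measurable, so it may be pulled out of the conditional expectation.
  have hunbiased : ∀ t, ∫ ω, ⟪h t ω, g t ω⟫_ℝ ∂μ = ∫ ω, η t ω * ‖gradient f (x t ω)‖ ^ 2 ∂μ :=
    fun t => by
      rw [integral_inner_eq_of_condExp_eq (ℱ.le t) (hh t) (hhg t) (hg_int t) (hg_cond t)]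
      simp only [h, real_inner_smul_left, real_inner_self_eq_norm_sq]
  have hpath : ∀ᵐ ω ∂μ, ∑ t ∈ range T, ⟪h t ω, g t ω⟫_ℝ ≤ f x₁ - B + K * D := by
    filter_upwards [hD] with ω hω
    have hdesc := sum_mul_inner_gradient_le_of_update hf hgrad hB
      (x := fun t => x t ω) (g := fun t => g t ω) (η := fun t => η t ω) (fun t => hupd t ω) T
    simp only [hx0] at hdesc
    simp only [h, real_inner_smul_left]
    nlinarith [hω T, K.coe_nonneg]
  calc ∑ t ∈ range T, ∫ ω, η t ω * ‖gradient f (x t ω)‖ ^ 2 ∂μ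
      = ∫ ω, ∑ t ∈ range T, ⟪h t ω, g t ω⟫_ℝ ∂μ := by
        rw [integral_finsetSum _ fun t _ => hhg t]
        exact sum_congr rfl fun t _ => (hunbiased t).symm
    _ ≤ ∫ _, f x₁ - B + K * D ∂μ :=
        integral_mono_ae (integrable_finsetSum _ fun t _ => hhg t) (integrable_const _) hpath
    _ = f x₁ - B + K * D := by simp

lemma ae_summable_stepsize_mul_norm_gradient_sq (hf : Differentiable ℝ f)
    (hgrad : LipschitzWith K (gradient f)) (hgrad_le : ∀ y, ‖gradient f y‖ ≤ L)
    (hB : ∀ y, B ≤ f y) {x₁ : E} (hx0 : ∀ ω, x 0 ω = x₁) (hη : StronglyAdapted ℱ η)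
    (hη_nonneg : ∀ t ω, 0 ≤ η t ω) (hη_le : ∀ t ω, η t ω ≤ ηmax)
    (hg_meas : ∀ t, StronglyMeasurable[ℱ (t + 1)] (g t)) (hg_int : ∀ t, Integrable (g t) μ)
    (hg_cond : ∀ t, μ[g t | ℱ t] =ᵐ[μ] fun ω => gradient f (x t ω))
    (hupd : ∀ t ω, x (t + 1) ω = x t ω - η t ω • g t ω)
    (hD : ∀ᵐ ω ∂μ, ∀ T, ∑ t ∈ range T, η t ω ^ 2 * ‖g t ω‖ ^ 2 ≤ D) :
    ∀ᵐ ω ∂μ, Summable fun t => η t ω * ‖gradient f (x t ω)‖ ^ 2 := by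
  have hx : StronglyAdapted ℱ x :=
    stronglyAdapted_of_update (by rw [funext hx0]; exact stronglyMeasurable_const) hη hg_meas hupd
  have habs : ∀ t ω, |η t ω| ≤ ηmax := fun t ω => by
    rw [abs_of_nonneg (hη_nonneg t ω)]; exact hη_le t ω
  refine ae_summable_of_sum_integral_le (fun t ω => mul_nonneg (hη_nonneg t ω) (sq_nonneg _))
    (fun t => Integrable.of_bound (C := ηmax * L ^ 2) ?_ (ae_of_all _ fun ω => ?_))
    (sum_integral_stepsize_mul_norm_gradient_sq_le hf hgrad hgrad_le hB hx0 hx hη habs hg_int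
      hg_cond hupd hD)
  · exact (((hη t).mul ((hgrad.continuous.comp_stronglyMeasurable (hx t)).norm.pow 2)).mono
      (ℱ.le t)).aestronglyMeasurable
  · rw [norm_mul, Real.norm_eq_abs, norm_pow, norm_norm]
    exact mul_le_mul (habs t ω) (pow_le_pow_left₀ (norm_nonneg _) (hgrad_le _) 2) (by positivity)
      ((abs_nonneg _).trans (habs t ω))

end SGD

theorem sgd_global_adagrad_liminf_zero_ae_general
    {d : ℕ} {Ω : Type*} {m0 : MeasurableSpace Ω} {μ : Measure Ω}
    [IsProbabilityMeasure μ] (ℱ : Filtration ℕ m0)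
    (f : EuclideanSpace ℝ (Fin d) → ℝ) (M L S α β ε : ℝ)
    (hf_diff : Differentiable ℝ f)
    (hf_smooth : ∀ y z, ‖gradient f y - gradient f z‖ ≤ M * ‖y - z‖)
    (hf_lip : ∀ y z, |f y - f z| ≤ L * ‖y - z‖)
    (hf_bdd : BddBelow (Set.range f))
    (hα : 0 < α) (hβ : 0 < β) (hε : 0 < ε)
    (x g : ℕ → Ω → EuclideanSpace ℝ (Fin d)) (η : ℕ → Ω → ℝ)
    (x₁ : EuclideanSpace ℝ (Fin d))
    (hx0 : ∀ ω, x 0 ω = x₁)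
    (hg_meas : ∀ t, StronglyMeasurable[ℱ (t + 1)] (g t))
    (hg_int : ∀ t, Integrable (g t) μ)
    (hg_cond : ∀ t, μ[g t | ℱ t] =ᵐ[μ] fun ω => gradient f (x t ω))
    (hnoise : ∀ᵐ ω ∂μ, ∀ t, ‖g t ω - gradient f (x t ω)‖ ≤ S)
    (hη : ∀ t ω, η t ω =
      α / (β + ∑ i ∈ Finset.range t, ‖g i ω‖ ^ 2) ^ ((1 : ℝ) / 2 + ε))
    (hupd : ∀ t ω, x (t + 1) ω = x t ω - η t ω • g t ω) :
    ∀ᵐ ω ∂μ, Filter.liminf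
      (fun t : ℕ => ‖gradient f (x t ω)‖ ^ 2 * (t : ℝ) ^ ((1 : ℝ) / 2 - ε)) atTop = 0 := by
  obtain ⟨B, hB⟩ := hf_bdd
  have hgrad : LipschitzWith M.toNNReal (gradient f) :=
    .of_dist_le' fun y z => by simpa only [dist_eq_norm] using hf_smooth y z
  have hgrad_le : ∀ y, ‖gradient f y‖ ≤ L.toNNReal :=
    (LipschitzWith.of_dist_le' fun y z => by
      rw [Real.dist_eq, dist_eq_norm]; exact hf_lip y z).norm_gradient_le
  set K := ((L.toNNReal : ℝ) + S) ^ 2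
  have hg_le : ∀ᵐ ω ∂μ, ∀ t, ‖g t ω‖ ^ 2 ≤ K := by
    filter_upwards [hnoise] with ω hω t
    refine pow_le_pow_left₀ (norm_nonneg _) ?_ 2
    calc ‖g t ω‖ ≤ ‖gradient f (x t ω)‖ + ‖g t ω - gradient f (x t ω)‖ := norm_le_insert' _ _
      _ ≤ L.toNNReal + S := add_le_add (hgrad_le _) (hω t)
  obtain rfl : η = fun t ω => adagradStepsize α β (1 / 2 + ε) (fun i => ‖g i ω‖ ^ 2) t :=
    funext fun t => funext (hη t)
  have hsum := ae_summable_stepsize_mul_norm_gradient_sq hf_diff hgrad hgrad_le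
    (fun y => hB ⟨y, rfl⟩) hx0 (stronglyAdapted_adagradStepsize α β _ hg_meas)
    (fun t ω => (adagradStepsize_pos hα hβ (fun i => sq_nonneg _) t).le)
    (fun t ω => adagradStepsize_le hα.le hβ (by linarith) (fun i => sq_nonneg _) t)
    hg_meas hg_int hg_cond hupd
    (hg_le.mono fun ω hω T =>
      sum_adagradStepsize_sq_mul_le hβ (by linarith) (fun i => sq_nonneg _) hω T)
  filter_upwards [hsum, hg_le] with ω hω hgω
  have hlower : ∀ᶠ t : ℕ in atTop, α / (β + K) ^ (1 / 2 + ε) / (t : ℝ) ^ (1 / 2 + ε)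
      ≤ adagradStepsize α β (1 / 2 + ε) (fun i => ‖g i ω‖ ^ 2) t :=
    (eventually_ge_atTop 1).mono fun t ht =>
      div_rpow_le_adagradStepsize hα.le hβ (by linarith) (fun i => sq_nonneg _) hgω ht
  exact liminf_mul_rpow_eq_zero_of_summable
    (div_pos hα (rpow_pos_of_pos (add_pos_of_pos_of_nonneg hβ (sq_nonneg _)) _))
    (by ring) (fun t => sq_nonneg _) hlower hω

/-- Almost sure `liminf` result for SGD with the
global generalized AdaGrad stepsizes, for an `M`-smooth, `L`-Lipschitz function bounded
from below, with unbiased stochastic gradients whose noise has support bounded by `S`. -/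
theorem sgd_global_adagrad_liminf_zero_ae
    {d : ℕ} {Ω : Type*} {m0 : MeasurableSpace Ω} {μ : Measure Ω}
    [IsProbabilityMeasure μ] (ℱ : Filtration ℕ m0)
    (f : EuclideanSpace ℝ (Fin d) → ℝ) (M L S α β ε : ℝ)
    (hf_diff : Differentiable ℝ f)
    (hf_smooth : ∀ y z, ‖gradient f y - gradient f z‖ ≤ M * ‖y - z‖)
    (hf_lip : ∀ y z, |f y - f z| ≤ L * ‖y - z‖)
    (hf_bdd : BddBelow (Set.range f))
    (hα : 0 < α) (hβ : 0 < β) (hε : 0 < ε) (hε' : ε ≤ 1 / 2)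
    (x g : ℕ → Ω → EuclideanSpace ℝ (Fin d)) (η : ℕ → Ω → ℝ)
    (x₁ : EuclideanSpace ℝ (Fin d))
    (hx0 : ∀ ω, x 0 ω = x₁)
    (hg_meas : ∀ t, StronglyMeasurable[ℱ (t + 1)] (g t))
    (hg_int : ∀ t, Integrable (g t) μ)
    (hg_cond : ∀ t, μ[g t | ℱ t] =ᵐ[μ] fun ω => gradient f (x t ω))
    (hnoise : ∀ᵐ ω ∂μ, ∀ t, ‖g t ω - gradient f (x t ω)‖ ≤ S)
    (hη : ∀ t ω, η t ω =
      α / (β + ∑ i ∈ Finset.range t, ‖g i ω‖ ^ 2) ^ ((1 : ℝ) / 2 + ε))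
    (hupd : ∀ t ω, x (t + 1) ω = x t ω - η t ω • g t ω) :
    ∀ᵐ ω ∂μ, Filter.liminf
      (fun t : ℕ => ‖gradient f (x t ω)‖ ^ 2 * (t : ℝ) ^ ((1 : ℝ) / 2 - ε)) atTop = 0 :=
  sgd_global_adagrad_liminf_zero_ae_general ℱ f M L S α β ε hf_diff hf_smooth hf_lip hf_bdd hα hβ hε
    x g η x₁ hx0 hg_meas hg_int hg_cond hnoise hη hupd
end

section
/- Let (a_t)_{t≥1} and (b_t)_{t≥1} be two sequences of non-negative real numbers. Assume that the series Σ_{t=1}^∞ a_t b_t converges, that the series Σ_{t=1}^∞ a_t diverges, and that there exists K ≥ 0 such that |b_{t+1} − b_t| ≤ K a_t for all t. Then b_t converges to 0 as t → ∞. -/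
/-!
Because `∑ aₜ` diverges while `∑ aₜ bₜ` converges, `b` drops below any `c > 0` infinitely often.
Conversely, while `b` falls from `2c` to `c` it stays `≥ c`, and by `|bₜ₊₁ - bₜ| ≤ K aₜ` the fall
costs `a`-mass at least `c / K`, so `∑ aₜ bₜ`-mass at least `c² / K`. Once the tail of `∑ aₜ bₜ`
is below `c² / K`, a value `≥ 2c` would therefore keep `b > c` forever.
-/

open Filter Finset

section

variable {a b : ℕ → ℝ} {K : ℝ}

theorem sum_Ico_le_tsum_nat_add {f : ℕ → ℝ} (hf : Summable f) (h : ∀ t, 0 ≤ f t) (m n : ℕ) :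
    ∑ t ∈ Ico m n, f t ≤ ∑' k, f (k + m) := by
  rw [sum_Ico_eq_sum_range]
  simp_rw [add_comm m]
  exact ((summable_nat_add_iff m).2 hf).sum_le_tsum _ fun t _ => h (t + m)

theorem frequently_lt_of_summable_mul (ha : ∀ t, 0 ≤ a t) (hab : Summable fun t => a t * b t)
    (hna : ¬ Summable a) {c : ℝ} (hc : 0 < c) : ∃ᶠ t in atTop, b t < c := by
  contrapose! hna
  refine (hab.mul_left c⁻¹).of_norm_bounded_eventually_nat ?_
  filter_upwards [hna] with t ht
  rw [Real.norm_of_nonneg (ha t), le_inv_mul_iff₀ hc, mul_comm]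
  exact mul_le_mul_of_nonneg_left ht (ha t)

theorem mul_sub_le_mul_sum_Ico_mul (ha : ∀ t, 0 ≤ a t) (hK : 0 ≤ K)
    (hKa : ∀ t, |b (t + 1) - b t| ≤ K * a t) {c : ℝ} (hc : 0 ≤ c) {m n : ℕ} (hmn : m ≤ n)
    (hcb : ∀ t ∈ Ico m n, c ≤ b t) :
    c * (b m - b n) ≤ K * ∑ t ∈ Ico m n, a t * b t := by
  have hvar : b m - b n ≤ K * ∑ t ∈ Ico m n, a t :=
    calc b m - b n ≤ |∑ t ∈ Ico m n, (b (t + 1) - b t)| := by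
          rw [sum_Ico_sub b hmn, abs_sub_comm]; exact le_abs_self _
      _ ≤ ∑ t ∈ Ico m n, K * a t := (abs_sum_le_sum_abs _ _).trans (sum_le_sum fun t _ => hKa t)
      _ = K * ∑ t ∈ Ico m n, a t := (mul_sum _ _ _).symm
  calc c * (b m - b n) ≤ K * ∑ t ∈ Ico m n, c * a t := by
        rw [← mul_sum, mul_left_comm]; exact mul_le_mul_of_nonneg_left hvar hc
    _ ≤ K * ∑ t ∈ Ico m n, a t * b t := by
        refine mul_le_mul_of_nonneg_left (sum_le_sum fun t ht => ?_) hK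
        rw [mul_comm]; exact mul_le_mul_of_nonneg_left (hcb t ht) (ha t)

theorem lt_of_two_mul_le_of_forall_sum_Ico_mul_lt (ha : ∀ t, 0 ≤ a t) (hK : 0 ≤ K)
    (hKa : ∀ t, |b (t + 1) - b t| ≤ K * a t) {c : ℝ} (hc : 0 ≤ c) {m : ℕ} (hm : 2 * c ≤ b m)
    (htail : ∀ n, K * ∑ t ∈ Ico m n, a t * b t < c ^ 2) {n : ℕ} (hmn : m ≤ n) : c < b n := by
  induction n using Nat.strong_induction_on with
  | _ n ih =>
    have hcb : ∀ t ∈ Ico m n, c ≤ b t := fun t ht =>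
      (ih t (mem_Ico.1 ht).2 (mem_Ico.1 ht).1).le
    have := (mul_sub_le_mul_sum_Ico_mul ha hK hKa hc hmn hcb).trans_lt (htail n)
    nlinarith

theorem eventually_lt_of_summable_mul (ha : ∀ t, 0 ≤ a t) (hb : ∀ t, 0 ≤ b t)
    (hab : Summable fun t => a t * b t) (hna : ¬ Summable a) (hK : 0 ≤ K)
    (hKa : ∀ t, |b (t + 1) - b t| ≤ K * a t) {c : ℝ} (hc : 0 < c) :
    ∀ᶠ m in atTop, b m < 2 * c := by
  have hrem : ∀ᶠ m in atTop, K * ∑' k, a (k + m) * b (k + m) < c ^ 2 := by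
    have := (tendsto_sum_nat_add fun t => a t * b t).const_mul K
    rw [mul_zero] at this
    exact this.eventually (gt_mem_nhds (by positivity))
  filter_upwards [hrem] with m hm
  by_contra! hbm
  have htail (n : ℕ) : K * ∑ t ∈ Ico m n, a t * b t < c ^ 2 :=
    (mul_le_mul_of_nonneg_left
      (sum_Ico_le_tsum_nat_add hab (fun t => mul_nonneg (ha t) (hb t)) m n) hK).trans_lt hm
  obtain ⟨n, hmn, hn⟩ := (frequently_lt_of_summable_mul ha hab hna hc).forall_exists_of_atTop m
  exact hn.not_gt (lt_of_two_mul_le_of_forall_sum_Ico_mul_lt ha hK hKa hc.le hbm htail hmn)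

end

/-- If `Σ aₜ bₜ` converges, `Σ aₜ` diverges, and `|b_{t+1} − bₜ| ≤ K aₜ`
for non-negative sequences `a`, `b` and some `K ≥ 0`, then `bₜ → 0`. -/
theorem tendsto_zero_of_summable_mul_of_divergent
    (a b : ℕ → ℝ) (ha : ∀ t, 0 ≤ a t) (hb : ∀ t, 0 ≤ b t)
    (hconv : ∃ s : ℝ, Tendsto (fun T => ∑ t ∈ Finset.range T, a t * b t) atTop (nhds s))
    (hdiv : Tendsto (fun T => ∑ t ∈ Finset.range T, a t) atTop atTop)
    (K : ℝ) (hK : 0 ≤ K) (hKa : ∀ t, |b (t + 1) - b t| ≤ K * a t) :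
    Tendsto b atTop (nhds 0) := by
  obtain ⟨s, hs⟩ := hconv
  have hab : Summable fun t => a t * b t :=
    ((hasSum_iff_tendsto_nat_of_nonneg (fun t => mul_nonneg (ha t) (hb t)) s).2 hs).summable
  have hna : ¬ Summable a := (not_summable_iff_tendsto_nat_atTop_of_nonneg ha).2 hdiv
  refine tendsto_order.2
    ⟨fun e he => Eventually.of_forall fun t => he.trans_le (hb t), fun e he => ?_⟩
  simpa only [mul_div_cancel₀ e two_ne_zero] using
    eventually_lt_of_summable_mul ha hb hab hna hK hKa (half_pos he)
end

section
/- Let a_0 > 0, let a_1,…,a_T ≥ 0, and let β > 1. Then Σ_{t=1}^T a_t / (a_0 + Σ_{i=1}^t a_i)^β ≤ 1 / ((β − 1) a_0^{β−1}). -/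
/-!
With `S t = a 0 + ⋯ + a t`, the term `a t / S t ^ β = (S t - S (t - 1)) / S t ^ β` is at most
`(S (t - 1) ^ (1 - β) - S t ^ (1 - β)) / (β - 1)`, i.e. at most `∫ x ^ (-β)` over `[S (t - 1), S t]`:
this is the tangent-line inequality at `S t` for the convex function `x ↦ x ^ (1 - β)`, which is
Bernoulli's inequality for `(S t / S (t - 1)) ^ β`. The bounds telescope to `a 0 ^ (1 - β) / (β - 1)`.
-/

open Finset Real

theorem rpow_one_sub_add_sub_div_rpow_le {s S β : ℝ} (hs : 0 < s) (hS : 0 < S) (hβ : 1 ≤ β) :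
    S ^ (1 - β) + (β - 1) * (S - s) / S ^ β ≤ s ^ (1 - β) := by
  have bernoulli : 1 + β * (S / s - 1) ≤ (S / s) ^ β := by
    simpa using one_add_mul_self_le_rpow_one_add (s := S / s - 1) (by linarith [div_pos hS hs]) hβ
  rw [div_rpow hS.le hs.le, le_div_iff₀ (rpow_pos_of_pos hs β)] at bernoulli
  rw [rpow_sub hS, rpow_sub hs, rpow_one, rpow_one, ← add_div,
    div_le_div_iff₀ (rpow_pos_of_pos hS β) (rpow_pos_of_pos hs β)]
  have expand : s * (1 + β * (S / s - 1)) = S + (β - 1) * (S - s) := by field_simp; ring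
  rw [← expand, mul_assoc]
  exact mul_le_mul_of_nonneg_left bernoulli hs.le

theorem sum_range_sub_div_rpow_le {S : ℕ → ℝ} (hS : ∀ t, 0 < S t) {β : ℝ} (hβ : 1 < β) (n : ℕ) :
    ∑ t ∈ range n, (S (t + 1) - S t) / S (t + 1) ^ β ≤ S 0 ^ (1 - β) / (β - 1) := by
  have hβ' : 0 < β - 1 := sub_pos.2 hβ
  calc ∑ t ∈ range n, (S (t + 1) - S t) / S (t + 1) ^ β
      ≤ ∑ t ∈ range n, (S t ^ (1 - β) - S (t + 1) ^ (1 - β)) / (β - 1) := by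
        refine sum_le_sum fun t _ => ?_
        rw [le_div_iff₀ hβ', mul_comm, ← mul_div_assoc, le_sub_iff_add_le']
        exact rpow_one_sub_add_sub_div_rpow_le (hS t) (hS (t + 1)) hβ.le
    _ = (S 0 ^ (1 - β) - S n ^ (1 - β)) / (β - 1) := by
        rw [← sum_div, sum_range_sub']
    _ ≤ S 0 ^ (1 - β) / (β - 1) := by
        gcongr
        exact sub_le_self _ (rpow_nonneg (hS n).le _)

theorem sum_Icc_one_eq_sum_range {M : Type*} [AddCommMonoid M] (f : ℕ → M) (n : ℕ) :
    ∑ t ∈ Icc 1 n, f t = ∑ t ∈ range n, f (t + 1) := by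
  rw [range_eq_Ico, sum_Ico_add', ← Ico_succ_right_eq_Icc, Nat.succ_eq_succ, Nat.succ_eq_add_one,
    zero_add]

theorem sum_div_pow_sum_le_general
    (T : ℕ) (a : ℕ → ℝ) (ha0 : 0 < a 0)
    (ha : ∀ i, 1 ≤ i → 0 ≤ a i) (β : ℝ) (hβ : 1 < β) :
    ∑ t ∈ Finset.Icc 1 T, a t / (∑ i ∈ Finset.range (t + 1), a i) ^ β
      ≤ 1 / ((β - 1) * a 0 ^ (β - 1)) := by
  set S : ℕ → ℝ := fun t => ∑ i ∈ range (t + 1), a i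
  have hS : ∀ t, 0 < S t := fun t => by
    rw [show S t = a 0 + ∑ i ∈ range t, a (i + 1) from sum_range_succ' a t |>.trans (add_comm _ _)]
    exact add_pos_of_pos_of_nonneg ha0 (sum_nonneg fun i _ => ha (i + 1) (Nat.le_add_left 1 i))
  have hstep : ∀ t, a (t + 1) = S (t + 1) - S t := fun t => by
    simp only [S, sum_range_succ _ (t + 1)]; ring
  calc ∑ t ∈ Icc 1 T, a t / S t ^ β
      = ∑ t ∈ range T, (S (t + 1) - S t) / S (t + 1) ^ β := by
        simp only [sum_Icc_one_eq_sum_range, hstep]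
    _ ≤ S 0 ^ (1 - β) / (β - 1) := sum_range_sub_div_rpow_le hS hβ T
    _ = 1 / ((β - 1) * a 0 ^ (β - 1)) := by
        rw [show S 0 = a 0 by simp [S], show 1 - β = -(β - 1) by ring, rpow_neg ha0.le]
        field_simp

/-- For `a₀ > 0`, `a₁, …, a_T ≥ 0` and `β > 1`,
`Σ_{t=1}^T aₜ / (a₀ + Σ_{i=1}^t aᵢ)^β ≤ 1 / ((β − 1) a₀^{β−1})`. -/
theorem sum_div_pow_sum_le
    (T : ℕ) (hT : 0 < T) (a : ℕ → ℝ) (ha0 : 0 < a 0)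
    (ha : ∀ i, 1 ≤ i → 0 ≤ a i) (β : ℝ) (hβ : 1 < β) :
    ∑ t ∈ Finset.Icc 1 T, a t / (∑ i ∈ Finset.range (t + 1), a i) ^ β
      ≤ 1 / ((β - 1) * a 0 ^ (β - 1)) :=
  sum_div_pow_sum_le_general T a ha0 ha β hβ
end
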